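/- If G is a graph with γ_g(G) = 2, then for every edge e of G, γ_g(G−e) ≤ 3. -/

import Mathlib

open Classical

noncomputable section

namespace DomGame

variable {V : Type*} [Fintype V]

/-- Closed neighborhood of `v` as a `Finset`. -/
noncomputable def N (G : SimpleGraph V) (v : V) : Finset V :=
  Finset.univ.filter (fun u => G.Adj v u ∨ u = v)

/-- Legal moves given the set `S` of already dominated vertices. -/
noncomputable def moves (G : SimpleGraph V) (S : Finset V) : Finset V :=
  Finset.univ.filter (fun v => ¬ N G v ⊆ S)

lemma card_lt {G : SimpleGraph V} {S : Finset V} (v : V) (hv : v ∈ moves G S) :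
    (Finset.univ \ (S ∪ N G v)).card < (Finset.univ \ S).card := by
  simp only [moves, Finset.mem_filter] at hv
  obtain ⟨u, hu, hus⟩ := Finset.not_subset.mp hv.2
  apply Finset.card_lt_card
  refine ⟨Finset.sdiff_subset_sdiff (le_refl _) Finset.subset_union_left, ?_⟩
  intro hsub
  have := hsub (Finset.mem_sdiff.mpr ⟨Finset.mem_univ u, hus⟩)
  rw [Finset.mem_sdiff, Finset.mem_union] at this
  exact this.2 (Or.inr hu)

mutual
/-- Number of moves with optimal play when it is Dominator's turn and
`S` is the set of already dominated vertices. -/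
noncomputable def gameD (G : SimpleGraph V) (S : Finset V) : ℕ :=
  if h : (moves G S).Nonempty then
    1 + (moves G S).attach.inf' (by simpa using h)
      (fun v => gameS G (S ∪ N G v.1))
  else 0
termination_by (Finset.univ \ S).card
decreasing_by exact card_lt v.1 v.2

/-- Number of moves with optimal play when it is Staller's turn. -/
noncomputable def gameS (G : SimpleGraph V) (S : Finset V) : ℕ :=
  if h : (moves G S).Nonempty then
    1 + (moves G S).attach.sup' (by simpa using h)
      (fun v => gameD G (S ∪ N G v.1))
  else 0
termination_by (Finset.univ \ S).card
decreasing_by exact card_lt v.1 v.2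
end

/-- The (Dominator-start) game domination number. -/
noncomputable def gammaG (G : SimpleGraph V) : ℕ := gameD G ∅

/-- The Staller-start game domination number. -/
noncomputable def gammaG' (G : SimpleGraph V) : ℕ := gameS G ∅

end DomGame

/-!
Let `v` be an optimal first move of Dominator in `G`. Since `γ_g(G) = 2`, every legal reply `u` of
Staller finishes the game: `N[v] ∪ N[u] = V`. Dominator opens with the same `v` in `G − e`. Whatever
Staller answers, the vertices still undominated are pairwise adjacent in `G − e`: either Staller's
move was legal in `G` too, and then at most one vertex (an end of `e`) stays undominated; or it
became legal only because `e = vt` was removed, and then every undominated vertex `x` lies outside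
`N[v]`, so `x` would have been a legal finishing reply in `G`, and its edges avoid `e`. Hence
Dominator finishes with any undominated vertex, and the game lasts at most three moves.
-/

open Finset

namespace DomGame

variable {V : Type*} [Fintype V]

section Game

variable {G : SimpleGraph V} {S : Finset V}

lemma mem_N {w x : V} : x ∈ N G w ↔ G.Adj w x ∨ x = w := by
  simp [N]

lemma self_mem_N (G : SimpleGraph V) (w : V) : w ∈ N G w :=
  mem_N.mpr (Or.inr rfl)

lemma mem_moves {v : V} : v ∈ moves G S ↔ ¬ N G v ⊆ S := by
  simp [moves]

lemma mem_moves_of_notMem {x : V} (hx : x ∉ S) : x ∈ moves G S :=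
  mem_moves.mpr fun h => hx (h (self_mem_N G x))

lemma moves_univ : moves G univ = ∅ :=
  eq_empty_of_forall_notMem fun _ hv => mem_moves.mp hv (subset_univ _)

lemma gameS_univ : gameS G univ = 0 := by
  rw [gameS.eq_def, dif_neg (by simp [moves_univ])]

lemma gameD_le_one_add_gameS {v : V} (hv : v ∈ moves G S) :
    gameD G S ≤ 1 + gameS G (S ∪ N G v) := by
  rw [gameD.eq_def, dif_pos ⟨v, hv⟩]
  exact Nat.add_le_add_left
    (inf'_le (fun w : {x // x ∈ moves G S} => gameS G (S ∪ N G w.1)) (mem_attach _ ⟨v, hv⟩)) 1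

lemma exists_gameD_eq_one_add_gameS (h : (moves G S).Nonempty) :
    ∃ v ∈ moves G S, gameD G S = 1 + gameS G (S ∪ N G v) := by
  rw [gameD.eq_def, dif_pos h]
  obtain ⟨⟨v, hv⟩, -, heq⟩ :=
    exists_mem_eq_inf' (s := (moves G S).attach) (by simpa using h)
      (fun w => gameS G (S ∪ N G w.1))
  exact ⟨v, hv, congrArg (1 + ·) heq⟩

lemma one_add_gameD_le_gameS {v : V} (hv : v ∈ moves G S) :
    1 + gameD G (S ∪ N G v) ≤ gameS G S := by
  rw [gameS.eq_def, dif_pos ⟨v, hv⟩]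
  exact Nat.add_le_add_left
    (le_sup' (fun w : {x // x ∈ moves G S} => gameD G (S ∪ N G w.1)) (mem_attach _ ⟨v, hv⟩)) 1

lemma gameS_le_one_add {n : ℕ} (h : ∀ v ∈ moves G S, gameD G (S ∪ N G v) ≤ n) :
    gameS G S ≤ 1 + n := by
  rw [gameS.eq_def]
  split_ifs
  · exact Nat.add_le_add_left (sup'_le _ _ fun w _ => h w.1 w.2) 1
  · omega

lemma eq_univ_of_gameD_eq_zero (h : gameD G S = 0) : S = univ :=
  eq_univ_of_forall fun x => by_contra fun hx => by
    obtain ⟨v, -, hv⟩ := exists_gameD_eq_one_add_gameS ⟨x, mem_moves_of_notMem (G := G) hx⟩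
    omega

lemma gameD_le_one_of_forall_mem_N (h : ∀ x ∉ S, ∀ y ∉ S, y ∈ N G x) : gameD G S ≤ 1 := by
  by_cases hS : ∀ x, x ∈ S
  · rw [eq_univ_of_forall hS, gameD.eq_def, dif_neg (by simp [moves_univ])]
    omega
  obtain ⟨x, hx⟩ := not_forall.mp hS
  have hdom : S ∪ N G x = univ :=
    eq_univ_of_forall fun y => mem_union.mpr (or_iff_not_imp_left.mpr (h x hx y))
  simpa [hdom, gameS_univ] using gameD_le_one_add_gameS (mem_moves_of_notMem (G := G) hx)

lemma exists_forall_union_N_eq_univ [Nonempty V] (hG : gammaG G ≤ 2) :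
    ∃ v, ∀ u, ¬ N G u ⊆ N G v → N G v ∪ N G u = univ := by
  obtain ⟨v, -, hv⟩ := exists_gameD_eq_one_add_gameS
    ⟨Classical.arbitrary V, mem_moves_of_notMem (G := G) (notMem_empty _)⟩
  refine ⟨v, fun u hu => eq_univ_of_gameD_eq_zero (G := G) ?_⟩
  have := one_add_gameD_le_gameS (mem_moves.mpr hu)
  rw [empty_union] at hv
  unfold gammaG at hG
  omega

end Game

section DeleteEdge

variable {G : SimpleGraph V} {e : Sym2 V} {u v x y : V}

local notation "G'" => SimpleGraph.deleteEdges G (singleton e)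

lemma mem_N_deleteEdges_singleton (he : ¬ e.IsDiag) {w : V} :
    x ∈ N G' w ↔ x ∈ N G w ∧ s(w, x) ≠ e := by
  simp only [mem_N, SimpleGraph.deleteEdges_adj, Set.mem_singleton_iff]
  by_cases hxw : x = w
  · subst hxw
    exact ⟨fun _ => ⟨Or.inr rfl, fun h => he (h ▸ Sym2.mk_isDiag_iff.mpr rfl)⟩,
      fun _ => Or.inr rfl⟩
  · simp [hxw]

lemma eq_of_notMem_union_N_deleteEdges (he : ¬ e.IsDiag) (huniv : N G v ∪ N G u = univ)
    (hx : x ∉ N G' v ∪ N G' u) (hy : y ∉ N G' v ∪ N G' u) : x = y := by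
  have lost : ∀ z ∉ N G' v ∪ N G' u, ∃ w, (w = v ∨ w = u) ∧ s(w, z) = e := by
    intro z hz
    simp only [mem_union, mem_N_deleteEdges_singleton he, not_or, not_and_or, not_not] at hz
    rcases mem_union.mp (huniv ▸ mem_univ z) with hzv | hzu
    · exact ⟨v, Or.inl rfl, hz.1.resolve_left (not_not.mpr hzv)⟩
    · exact ⟨u, Or.inr rfl, hz.2.resolve_left (not_not.mpr hzu)⟩
  obtain ⟨w, hw, hwx⟩ := lost x hx
  obtain ⟨w', -, hwy⟩ := lost y hy
  rcases Sym2.eq_iff.mp (hwx.trans hwy.symm) with ⟨-, hxy⟩ | ⟨rfl, -⟩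
  · exact hxy
  · rcases hw with rfl | rfl
    · exact absurd (mem_union_left _ (self_mem_N _ _)) hy
    · exact absurd (mem_union_right _ (self_mem_N _ _)) hy

lemma mem_N_deleteEdges_of_N_subset (he : ¬ e.IsDiag)
    (hv : ∀ w, ¬ N G w ⊆ N G v → N G v ∪ N G w = univ)
    (hsub : N G u ⊆ N G v) (hu : ¬ N G' u ⊆ N G' v)
    (hx : x ∉ N G' v ∪ N G' u) (hy : y ∉ N G' v ∪ N G' u) : y ∈ N G' x := by
  obtain ⟨t, htu, htv⟩ := not_subset.mp hu
  have hvt : s(v, t) = e := by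
    simp only [mem_N_deleteEdges_singleton he, not_and_or, not_not] at htv
    exact htv.resolve_left (not_not.mpr (hsub (mem_N_deleteEdges_singleton he |>.mp htu).1))
  -- Removing `e = vt` only takes `t` out of `N[v]`, and `t` stays dominated by `u`.
  have outside : ∀ z ∉ N G' v ∪ N G' u, z ∉ N G v := by
    intro z hz hzv
    have hvz : s(v, z) = e := by
      by_contra hne
      exact hz (mem_union_left _ ((mem_N_deleteEdges_singleton he).mpr ⟨hzv, hne⟩))
    obtain rfl := Sym2.congr_right.mp (hvz.trans hvt.symm)
    exact hz (mem_union_right _ htu)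
  have hxv := outside x hx
  have hyx : y ∈ N G x :=
    (mem_union.mp (hv x (fun h => hxv (h (self_mem_N G x))) ▸ mem_univ y)).resolve_left
      (outside y hy)
  refine (mem_N_deleteEdges_singleton he).mpr ⟨hyx, fun hxy => ?_⟩
  rcases Sym2.eq_iff.mp (hxy.trans hvt.symm) with ⟨rfl, -⟩ | ⟨rfl, -⟩
  · exact hxv (self_mem_N G x)
  · exact hx (mem_union_right _ htu)

lemma mem_N_deleteEdges_of_notMem_union (he : ¬ e.IsDiag)
    (hv : ∀ w, ¬ N G w ⊆ N G v → N G v ∪ N G w = univ) (hu : ¬ N G' u ⊆ N G' v)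
    (hx : x ∉ N G' v ∪ N G' u) (hy : y ∉ N G' v ∪ N G' u) : y ∈ N G' x := by
  by_cases hsub : N G u ⊆ N G v
  · exact mem_N_deleteEdges_of_N_subset he hv hsub hu hx hy
  · obtain rfl := eq_of_notMem_union_N_deleteEdges he (hv u hsub) hx hy
    exact self_mem_N _ _

end DeleteEdge

end DomGame

open DomGame in
/-- If `γ_g(G) = 2`, then `γ_g(G−e) ≤ 3` for every edge `e`. -/
theorem gameD_two_edge_removal {V : Type*} [Fintype V] (G : SimpleGraph V)
    (hG : gammaG G = 2) (e : Sym2 V) (he : e ∈ G.edgeSet) :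
    gammaG (G.deleteEdges {e}) ≤ 3 := by
  have hdiag := G.not_isDiag_of_mem_edgeSet he
  have : Nonempty V := e.inductionOn fun a _ => ⟨a⟩
  obtain ⟨v, hv⟩ := exists_forall_union_N_eq_univ hG.le
  have hreply : gameS (G.deleteEdges {e}) (N (G.deleteEdges {e}) v) ≤ 1 + 1 :=
    gameS_le_one_add fun u hu => gameD_le_one_of_forall_mem_N fun x hx y hy =>
      mem_N_deleteEdges_of_notMem_union hdiag hv (mem_moves.mp hu) hx hy
  have hopen := gameD_le_one_add_gameS (G := G.deleteEdges {e})
    (mem_moves_of_notMem (notMem_empty v))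
  rw [empty_union] at hopen
  exact hopen.trans (by omega)
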